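/- arXiv:2304.04191 — 3 statements merged into one kernel-verified Lean document; each statement's English description precedes it below -/
import Mathlib

section
/- Let n ≥ 2 and d ≥ 2, let f be a homogeneous real polynomial of degree d in the variables x_1,…,x_n, and let x ∈ ℝ^n be a point with f(x) > 0. Then the following are equivalent: (1) the Hessian at x of the function y ↦ f(y)^{1/d} (defined on the open set where f > 0) is negative semidefinite; (2) the Hessian at x of the function y ↦ log f(y) is negative semidefinite; (3) the Hessian matrix H_f(x) = [∂_i∂_j f(x)]_{i,j=1}^n has exactly one positive eigenvalue (counted with multiplicity). -/
/-!
For `g = φ ∘ f` the second directional derivative at `x` is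
`φ''(f x) (∇f(x)·v)² + φ'(f x) vᵀ H v`, where `H` is the Hessian of `f` at `x`. Hence (1) and
(2) both say `vᵀ H v ≤ κ (∇f(x)·v)²` for all `v`, with `κ = (1 - 1/d)/f(x)` for `f^{1/d}` and
`κ = 1/f(x)` for `log f`, so (1) implies (2). Euler's identities `∇f(x)·x = d f(x)` and
`H x = (d - 1) ∇f(x)` give `xᵀ H x = d (d - 1) f(x) > 0`, so `H` has a positive eigenvalue.
Condition (2) makes `vᵀ H v ≤ 0` on the hyperplane `∇f(x)·v = 0`, which leaves room for at most
one positive eigenvalue. Conversely, one positive eigenvalue makes the form nonpositive on some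
hyperplane, and together with `xᵀ H x > 0` this yields the reverse Cauchy–Schwarz inequality
`(vᵀ H v)(xᵀ H x) ≤ (xᵀ H v)²`; by Euler's identities this is exactly (1).
-/

open MvPolynomial
open scoped Matrix Topology

namespace LorentzianPaper

/-- Hessian matrix of a multivariate polynomial `f` at a point `x`. -/
noncomputable def hess {n : ℕ} (f : MvPolynomial (Fin n) ℝ) (x : Fin n → ℝ) :
    Matrix (Fin n) (Fin n) ℝ :=
  Matrix.of fun i j => eval x (pderiv i (pderiv j f))

/-- Number of positive eigenvalues (with multiplicity) of a real symmetric matrix. -/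
noncomputable def posEigCount {n : ℕ} (M : Matrix (Fin n) (Fin n) ℝ) : ℕ :=
  if h : M.IsHermitian then {i | 0 < h.eigenvalues i}.ncard else 0

/-- A function `g : ℝ^n → ℝ` has negative semidefinite Hessian (second derivative) at `x`. -/
def HessNegSemidef {n : ℕ} (g : (Fin n → ℝ) → ℝ) (x : Fin n → ℝ) : Prop :=
  ∀ v : Fin n → ℝ, fderiv ℝ (fun y => fderiv ℝ g y v) x v ≤ 0

end LorentzianPaper

theorem LinearMap.BilinForm.IsSymm.mul_le_sq_of_nonpos_on_ker {V : Type*} [AddCommGroup V]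
    [Module ℝ V] {B : LinearMap.BilinForm ℝ V} (hB : B.IsSymm) {ψ : V →ₗ[ℝ] ℝ}
    (hψ : ∀ v, ψ v = 0 → B v v ≤ 0) {x : V} (hx : 0 < B x x) (v : V) :
    B v v * B x x ≤ B x v ^ 2 := by
  -- The quadratic `s ↦ B (v + s • x) (v + s • x)` has positive leading coefficient `B x x` and a
  -- nonpositive value where `ψ (v + s • x) = 0`, so its discriminant is nonnegative.
  have hψx : ψ x ≠ 0 := fun h => (hψ x h).not_gt hx
  set s := -(ψ v / ψ x)
  have hker : ψ (v + s • x) = 0 := by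
    simp only [map_add, map_smul, smul_eq_mul, s]
    field_simp
    ring
  have hexp : B (v + s • x) (v + s • x) = B v v + 2 * s * B x v + s ^ 2 * B x x := by
    simp only [map_add, map_smul, LinearMap.add_apply, LinearMap.smul_apply, smul_eq_mul,
      hB.eq v x]
    ring
  nlinarith [hψ _ hker, sq_nonneg (s * B x x + B x v)]

namespace Matrix

variable {ι : Type*} [Fintype ι] [DecidableEq ι] {M : Matrix ι ι ℝ}

namespace IsHermitian

variable (hM : M.IsHermitian)

theorem dotProduct_mulVec_self_eq_sum (v : ι → ℝ) :
    v ⬝ᵥ M *ᵥ v =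
      ∑ i, hM.eigenvalues i * (star (hM.eigenvectorUnitary : Matrix ι ι ℝ) *ᵥ v) i ^ 2 := by
  set U : Matrix ι ι ℝ := ↑hM.eigenvectorUnitary
  conv_lhs => rw [hM.spectral_theorem]
  have hU : Uᵀ = star U := (conjTranspose_eq_transpose_of_trivial U).symm
  rw [Unitary.conjStarAlgAut_apply, ← mulVec_mulVec, ← mulVec_mulVec, dotProduct_mulVec,
    ← mulVec_transpose, hU, dotProduct, Finset.sum_congr rfl fun i _ => by
      rw [mulVec_diagonal]]
  simp only [Function.comp_apply, RCLike.ofReal_real_eq_id, id]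
  exact Finset.sum_congr rfl fun i _ => by ring

theorem ncard_pos_eigenvalues_le_one {ψ : (ι → ℝ) →ₗ[ℝ] ℝ}
    (hψ : ∀ v, ψ v = 0 → v ⬝ᵥ M *ᵥ v ≤ 0) : {i | 0 < hM.eigenvalues i}.ncard ≤ 1 := by
  refine (Set.ncard_le_one).mpr fun k hk l hl => ?_
  by_contra hkl
  set b : ι → ι → ℝ := fun j => ⇑(hM.eigenvectorBasis j)
  obtain ⟨α, β, hαβ, hker⟩ : ∃ α β : ℝ, (α ≠ 0 ∨ β ≠ 0) ∧ ψ (α • b k + β • b l) = 0 := by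
    by_cases h : ψ (b k) = 0
    · exact ⟨1, 0, Or.inl one_ne_zero, by simp [h]⟩
    · exact ⟨ψ (b l), -ψ (b k), Or.inr (neg_ne_zero.mpr h), by simp; ring⟩
  have hcoord : star (hM.eigenvectorUnitary : Matrix ι ι ℝ) *ᵥ (α • b k + β • b l) =
      α • Pi.single k 1 + β • Pi.single l 1 := by
    simp only [mulVec_add, mulVec_smul, b, hM.star_eigenvectorUnitary_mulVec]
  have hQ := hψ _ hker
  rw [hM.dotProduct_mulVec_self_eq_sum, hcoord,
    Fintype.sum_eq_add k l hkl fun i hi => by simp [hi.1, hi.2]] at hQ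
  simp only [Pi.add_apply, Pi.smul_apply, Pi.single_eq_same, Pi.single_eq_of_ne hkl,
    Pi.single_eq_of_ne (Ne.symm hkl), smul_eq_mul, mul_one, mul_zero, add_zero, zero_add] at hQ
  have hk' : 0 < hM.eigenvalues k := hk
  have hl' : 0 < hM.eigenvalues l := hl
  rcases hαβ with h | h
  · nlinarith [sq_pos_of_ne_zero h, sq_nonneg β]
  · nlinarith [sq_pos_of_ne_zero h, sq_nonneg α]

theorem ncard_pos_eigenvalues_eq_one_iff {x : ι → ℝ} (hx : 0 < x ⬝ᵥ M *ᵥ x) :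
    {i | 0 < hM.eigenvalues i}.ncard = 1 ↔
      ∃ ψ : (ι → ℝ) →ₗ[ℝ] ℝ, ∀ v, ψ v = 0 → v ⬝ᵥ M *ᵥ v ≤ 0 := by
  set U : Matrix ι ι ℝ := ↑hM.eigenvectorUnitary
  constructor
  · intro h
    obtain ⟨k, hk⟩ := Set.ncard_eq_one.mp h
    refine ⟨(LinearMap.proj k).comp (mulVecLin (star U)), fun v hv => ?_⟩
    rw [hM.dotProduct_mulVec_self_eq_sum]
    refine Finset.sum_nonpos fun i _ => ?_
    by_cases hi : i = k
    · subst hi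
      rw [LinearMap.comp_apply, mulVecLin_apply, LinearMap.proj_apply] at hv
      simp [U, hv]
    · have : hM.eigenvalues i ≤ 0 := not_lt.mp fun hpos => hi (hk ▸ hpos : i ∈ ({k} : Set ι))
      exact mul_nonpos_of_nonpos_of_nonneg this (sq_nonneg _)
  · rintro ⟨ψ, hψ⟩
    refine le_antisymm (hM.ncard_pos_eigenvalues_le_one hψ) (Nat.one_le_iff_ne_zero.mpr ?_)
    refine ((Set.ncard_pos).mpr ?_).ne'
    by_contra hnone
    have hnonpos : ∀ i, hM.eigenvalues i ≤ 0 := fun i => not_lt.mp fun hi => hnone ⟨i, hi⟩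
    refine hx.not_ge ?_
    rw [hM.dotProduct_mulVec_self_eq_sum]
    exact Finset.sum_nonpos fun i _ => mul_nonpos_of_nonpos_of_nonneg (hnonpos i) (sq_nonneg _)

end IsHermitian
end Matrix

theorem MvPolynomial.pderiv_pderiv_comm {R σ : Type*} [CommRing R] (i j : σ)
    (p : MvPolynomial σ R) : pderiv i (pderiv j p) = pderiv j (pderiv i p) := by
  have h : ⁅pderiv i, pderiv j⁆ = (0 : Derivation R (MvPolynomial σ R) (MvPolynomial σ R)) :=
    derivation_ext fun k => by
      classical
      rw [Derivation.commutator_apply, pderiv_X, pderiv_X, Pi.single_apply, Pi.single_apply]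
      split_ifs <;> simp
  have := congr($h p)
  rw [Derivation.commutator_apply] at this
  simpa [sub_eq_zero] using this

namespace LorentzianPaper

section Gradient

variable {R σ : Type*} [CommSemiring R]

noncomputable def grad (p : MvPolynomial σ R) (x : σ → R) : σ → R := fun i => eval x (pderiv i p)

variable [Fintype σ]

theorem grad_dotProduct (p : MvPolynomial σ R) (x v : σ → R) :
    grad p x ⬝ᵥ v = eval x (∑ i, v i • pderiv i p) := by
  simp [grad, dotProduct, mul_comm]

theorem _root_.MvPolynomial.IsHomogeneous.grad_dotProduct_self {p : MvPolynomial σ R} {d : ℕ}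
    (hp : p.IsHomogeneous d) (x : σ → R) : grad p x ⬝ᵥ x = d * eval x p := by
  simpa [grad, dotProduct, eval_sum, mul_comm, nsmul_eq_mul] using
    congr(eval x $(hp.sum_X_mul_pderiv))

theorem sum_smul_proj_apply {𝕜 : Type*} [NontriviallyNormedField 𝕜] (a v : σ → 𝕜) :
    (∑ i, a i • (ContinuousLinearMap.proj i : (σ → 𝕜) →L[𝕜] 𝕜)) v = a ⬝ᵥ v := by
  simp [dotProduct]

theorem hasFDerivAt_eval {𝕜 : Type*} [NontriviallyNormedField 𝕜] (p : MvPolynomial σ 𝕜)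
    (x : σ → 𝕜) :
    HasFDerivAt (fun y => eval y p)
      (∑ i, grad p x i • (ContinuousLinearMap.proj i : (σ → 𝕜) →L[𝕜] 𝕜)) x := by
  induction p using MvPolynomial.induction_on with
  | C a =>
    simp only [eval_C]
    refine (hasFDerivAt_const a x).congr_fderiv ?_
    ext v
    simp [grad]
  | add p q hp hq =>
    simp only [map_add]
    refine (hp.fun_add hq).congr_fderiv ?_
    ext v
    simp [grad, add_mul, Finset.sum_add_distrib]
  | mul_X p k hp =>
    classical
    simp only [map_mul, eval_X]
    refine (hp.mul (hasFDerivAt_apply k x)).congr_fderiv ?_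
    ext v
    simp [grad, pderiv_X, Pi.single_apply, add_mul, Finset.sum_add_distrib, Finset.mul_sum,
      apply_ite, mul_assoc]

end Gradient

section Hessian

variable {n : ℕ}

theorem hess_isSymm (f : MvPolynomial (Fin n) ℝ) (x : Fin n → ℝ) : (hess f x).IsSymm := by
  ext i j
  simp [hess, pderiv_pderiv_comm]

theorem dotProduct_hess_mulVec (f : MvPolynomial (Fin n) ℝ) (x v w : Fin n → ℝ) :
    v ⬝ᵥ hess f x *ᵥ w = grad (∑ i, w i • pderiv i f) x ⬝ᵥ v := by
  simp only [hess, grad, dotProduct, Matrix.mulVec, Matrix.of_apply, map_sum,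
    Derivation.map_smul, smul_eval, Finset.mul_sum, Finset.sum_mul]
  exact Finset.sum_congr rfl fun i _ => Finset.sum_congr rfl fun j _ => by ring

theorem _root_.MvPolynomial.IsHomogeneous.dotProduct_hess_mulVec {f : MvPolynomial (Fin n) ℝ}
    {d : ℕ} (hf : f.IsHomogeneous d) (x v : Fin n → ℝ) :
    x ⬝ᵥ hess f x *ᵥ v = ((d - 1 : ℕ) : ℝ) * (grad f x ⬝ᵥ v) := by
  have hx : hess f x *ᵥ x = ((d - 1 : ℕ) : ℝ) • grad f x := by
    ext i
    rw [Pi.smul_apply, smul_eq_mul, grad, ← (hf.pderiv (i := i)).grad_dotProduct_self x]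
    simp [hess, grad, dotProduct, Matrix.mulVec, pderiv_pderiv_comm, mul_comm]
  rw [Matrix.dotProduct_mulVec, ← Matrix.mulVec_transpose, (hess_isSymm f x).eq, hx,
    smul_dotProduct, smul_eq_mul]

end Hessian

section Homogeneous

variable {n d : ℕ} {f : MvPolynomial (Fin n) ℝ} {x : Fin n → ℝ}

theorem _root_.MvPolynomial.IsHomogeneous.dotProduct_hess_mulVec_self_pos
    (hf : f.IsHomogeneous d) (hd : 2 ≤ d) (hx : 0 < eval x f) : 0 < x ⬝ᵥ hess f x *ᵥ x := by
  rw [hf.dotProduct_hess_mulVec, hf.grad_dotProduct_self, Nat.cast_pred (by omega)]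
  have hd' : (2 : ℝ) ≤ d := by exact_mod_cast hd
  exact mul_pos (by linarith) (mul_pos (by linarith) hx)

theorem _root_.MvPolynomial.IsHomogeneous.dotProduct_hess_mulVec_le_of_nonpos_on_ker
    (hf : f.IsHomogeneous d) (hd : 2 ≤ d) (hx : 0 < eval x f) {ψ : (Fin n → ℝ) →ₗ[ℝ] ℝ}
    (hψ : ∀ v, ψ v = 0 → v ⬝ᵥ hess f x *ᵥ v ≤ 0) (v : Fin n → ℝ) :
    v ⬝ᵥ hess f x *ᵥ v ≤ (1 - (d : ℝ)⁻¹) / eval x f * (grad f x ⬝ᵥ v) ^ 2 := by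
  have hpos := hf.dotProduct_hess_mulVec_self_pos hd hx
  have hCS := (Matrix.isSymm_toBilin'_iff_isSymm.mpr
    (hess_isSymm f x)).mul_le_sq_of_nonpos_on_ker
      (by simpa only [Matrix.toBilin'_apply'] using hψ) (by rwa [Matrix.toBilin'_apply']) v
  simp only [Matrix.toBilin'_apply', hf.dotProduct_hess_mulVec, hf.grad_dotProduct_self,
    Nat.cast_pred (by omega : 0 < d)] at hCS hpos
  have hd' : (0 : ℝ) < d := by exact_mod_cast (by omega : 0 < d)
  have hκ : (1 - (d : ℝ)⁻¹) / eval x f * (grad f x ⬝ᵥ v) ^ 2 * ((d - 1) * (d * eval x f)) =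
      ((d - 1) * (grad f x ⬝ᵥ v)) ^ 2 := by
    field_simp
  exact le_of_mul_le_mul_right (hCS.trans_eq hκ.symm) hpos

end Homogeneous

section SecondDerivative

variable {n : ℕ} {f : MvPolynomial (Fin n) ℝ} {x : Fin n → ℝ} {φ φ' : ℝ → ℝ} {φ'' : ℝ}

theorem fderiv_fderiv_comp_eval_apply
    (hφ : ∀ᶠ t in 𝓝 (eval x f), HasDerivAt φ (φ' t) t) (hφ' : HasDerivAt φ' φ'' (eval x f))
    (v : Fin n → ℝ) :
    fderiv ℝ (fun y => fderiv ℝ (fun z => φ (eval z f)) y v) x v =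
      φ'' * (grad f x ⬝ᵥ v) ^ 2 + φ' (eval x f) * (v ⬝ᵥ hess f x *ᵥ v) := by
  set P := ∑ i, v i • pderiv i f
  have hP : ∀ y, grad f y ⬝ᵥ v = eval y P := fun y => grad_dotProduct f y v
  have hfirst : (fun y => fderiv ℝ (fun z => φ (eval z f)) y v) =ᶠ[𝓝 x]
      fun y => φ' (eval y f) * eval y P := by
    filter_upwards [(hasFDerivAt_eval f x).continuousAt.eventually hφ] with y hy
    rw [HasFDerivAt.fderiv (f := fun z => φ (eval z f))
      (hy.comp_hasFDerivAt y (hasFDerivAt_eval f y)), smul_apply,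
      sum_smul_proj_apply, hP, smul_eq_mul]
  have hsecond : HasFDerivAt (fun y => φ' (eval y f) * eval y P) _ x :=
    (hφ'.comp_hasFDerivAt x (hasFDerivAt_eval f x)).fun_mul (hasFDerivAt_eval P x)
  rw [hfirst.fderiv_eq, hsecond.fderiv, dotProduct_hess_mulVec, ← hP]
  simp only [add_apply, smul_apply, sum_smul_proj_apply, smul_eq_mul, Function.comp_apply]
  ring

theorem hessNegSemidef_comp_eval_iff
    (hφ : ∀ᶠ t in 𝓝 (eval x f), HasDerivAt φ (φ' t) t) (hφ' : HasDerivAt φ' φ'' (eval x f))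
    (hpos : 0 < φ' (eval x f)) :
    HessNegSemidef (fun y => φ (eval y f)) x ↔
      ∀ v, v ⬝ᵥ hess f x *ᵥ v ≤ -φ'' / φ' (eval x f) * (grad f x ⬝ᵥ v) ^ 2 := by
  refine forall_congr' fun v => ?_
  rw [fderiv_fderiv_comp_eval_apply hφ hφ', div_mul_eq_mul_div, le_div_iff₀ hpos]
  constructor <;> intro h <;> linarith

theorem hessNegSemidef_log_eval_iff (hx : 0 < eval x f) :
    HessNegSemidef (fun y => Real.log (eval y f)) x ↔
      ∀ v, v ⬝ᵥ hess f x *ᵥ v ≤ (eval x f)⁻¹ * (grad f x ⬝ᵥ v) ^ 2 := by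
  have hκ : -(-(eval x f ^ 2)⁻¹) / (eval x f)⁻¹ = (eval x f)⁻¹ := by
    field_simp
  rw [← hκ]
  exact hessNegSemidef_comp_eval_iff
    ((lt_mem_nhds hx).mono fun t ht => Real.hasDerivAt_log ht.ne') (hasDerivAt_inv hx.ne')
    (inv_pos.mpr hx)

theorem hessNegSemidef_rpow_eval_iff (hx : 0 < eval x f) {c : ℝ} (hc : 0 < c) :
    HessNegSemidef (fun y => eval y f ^ c) x ↔
      ∀ v, v ⬝ᵥ hess f x *ᵥ v ≤ (1 - c) / eval x f * (grad f x ⬝ᵥ v) ^ 2 := by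
  have hκ : -(c * ((c - 1) * eval x f ^ (c - 1 - 1))) / (c * eval x f ^ (c - 1)) =
      (1 - c) / eval x f := by
    rw [Real.rpow_sub_one hx.ne']
    field_simp
    ring
  rw [← hκ]
  exact hessNegSemidef_comp_eval_iff
    ((lt_mem_nhds hx).mono fun t ht => Real.hasDerivAt_rpow_const (Or.inl ht.ne'))
    ((Real.hasDerivAt_rpow_const (Or.inl hx.ne')).const_mul c)
    (mul_pos hc (Real.rpow_pos_of_pos hx _))

end SecondDerivative

theorem statement0_general (n d : ℕ) (hd : 2 ≤ d)
    (f : MvPolynomial (Fin n) ℝ) (hf : f.IsHomogeneous d)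
    (x : Fin n → ℝ) (hx : 0 < eval x f) :
    (HessNegSemidef (fun y => (eval y f) ^ ((d : ℝ)⁻¹)) x ↔
      HessNegSemidef (fun y => Real.log (eval y f)) x) ∧
    (HessNegSemidef (fun y => Real.log (eval y f)) x ↔
      posEigCount (hess f x) = 1) := by
  rw [hessNegSemidef_rpow_eval_iff hx (by positivity), hessNegSemidef_log_eval_iff hx,
    posEigCount, dif_pos (Matrix.isHermitian_iff_isSymm.mpr (hess_isSymm f x)),
    Matrix.IsHermitian.ncard_pos_eigenvalues_eq_one_iff _
      (hf.dotProduct_hess_mulVec_self_pos hd hx)]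
  have hκ : (1 - (d : ℝ)⁻¹) / eval x f ≤ (eval x f)⁻¹ := by
    rw [div_eq_mul_inv]
    exact mul_le_of_le_one_left (inv_nonneg.mpr hx.le) (sub_le_self _ (by positivity))
  have nonpos_on_ker :
      (∀ v, v ⬝ᵥ hess f x *ᵥ v ≤ (eval x f)⁻¹ * (grad f x ⬝ᵥ v) ^ 2) →
        ∀ v, dotProductEquiv ℝ (Fin n) (grad f x) v = 0 → v ⬝ᵥ hess f x *ᵥ v ≤ 0 :=
    fun h v (hv : grad f x ⬝ᵥ v = 0) => by simpa [hv] using h v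
  refine ⟨⟨fun h v => (h v).trans (by gcongr), fun h => ?_⟩,
    ⟨fun h => ⟨_, nonpos_on_ker h⟩, ?_⟩⟩
  · exact hf.dotProduct_hess_mulVec_le_of_nonpos_on_ker hd hx (nonpos_on_ker h)
  · rintro ⟨ψ, hψ⟩ v
    exact (hf.dotProduct_hess_mulVec_le_of_nonpos_on_ker hd hx hψ v).trans (by gcongr)

/-- For a homogeneous polynomial `f` of degree `d ≥ 2` in `n ≥ 2` variables
and a point `x` with `f(x) > 0`, the following are equivalent: (1) the Hessian of `f^{1/d}`
at `x` is negative semidefinite; (2) the Hessian of `log f` at `x` is negative semidefinite;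
(3) the Hessian matrix of `f` at `x` has exactly one positive eigenvalue. -/
theorem statement0 (n d : ℕ) (hn : 2 ≤ n) (hd : 2 ≤ d)
    (f : MvPolynomial (Fin n) ℝ) (hf : f.IsHomogeneous d)
    (x : Fin n → ℝ) (hx : 0 < eval x f) :
    (HessNegSemidef (fun y => (eval y f) ^ ((d : ℝ)⁻¹)) x ↔
      HessNegSemidef (fun y => Real.log (eval y f)) x) ∧
    (HessNegSemidef (fun y => Real.log (eval y f)) x ↔
      posEigCount (hess f x) = 1) :=
  statement0_general n d hd f hf x hx

end LorentzianPaper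
end

section
/- Let f ∈ ℝ[x_1,…,x_n] be any polynomial all of whose coefficients are nonnegative (in particular, any Lorentzian polynomial). Then for all x, y, z ∈ ℝ^n with nonnegative coordinates, f(x+y+z) + f(x) ≥ f(x+y) + f(x+z). -/
open MvPolynomial

/-!
Say that `(a, b, c, d)` is a supermodular quadruple if `0 ≤ d ≤ b, c` and `b + c ≤ a + d`; the
intended reading is `(g (x+y+z), g (x+y), g (x+z), g x)` for a function `g`. The coordinate
quadruple `(xᵢ+yᵢ+zᵢ, xᵢ+yᵢ, xᵢ+zᵢ, xᵢ)` is one, and supermodular quadruples are closed under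
products, sums and nonnegative scalings, so each monomial and then each polynomial with
nonnegative coefficients yields one.
-/

variable {R : Type*} [CommRing R] [LinearOrder R] [IsStrictOrderedRing R]

def SupermodularQuad (a b c d : R) : Prop :=
  0 ≤ d ∧ d ≤ b ∧ d ≤ c ∧ b + c ≤ a + d

namespace SupermodularQuad

lemma of_nonneg {x y z : R} (hx : 0 ≤ x) (hy : 0 ≤ y) (hz : 0 ≤ z) :
    SupermodularQuad (x + y + z) (x + y) (x + z) x :=
  ⟨hx, le_add_of_nonneg_right hy, le_add_of_nonneg_right hz, by linarith⟩

lemma one : SupermodularQuad (1 : R) 1 1 1 :=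
  ⟨zero_le_one, le_rfl, le_rfl, le_rfl⟩

lemma mul {a b c d a' b' c' d' : R} (h : SupermodularQuad a b c d)
    (h' : SupermodularQuad a' b' c' d') :
    SupermodularQuad (a * a') (b * b') (c * c') (d * d') := by
  obtain ⟨hd, hdb, hdc, habcd⟩ := h
  obtain ⟨hd', hdb', hdc', habcd'⟩ := h'
  refine ⟨mul_nonneg hd hd', mul_le_mul hdb hdb' hd' (hd.trans hdb),
    mul_le_mul hdc hdc' hd' (hd.trans hdc), ?_⟩
  -- Since `a a' ≥ (b + c - d) a'`, the gap `a a' + d d' - b b' - c c'` is at least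
  -- `(b - d)(a' - b') + (c - d)(a' - c') + d (a' + d' - b' - c')`, a sum of nonnegative terms.
  have ha' : 0 ≤ a' := by linarith
  nlinarith [mul_le_mul_of_nonneg_right (show b + c - d ≤ a by linarith) ha',
    mul_nonneg (sub_nonneg.2 hdb) (show 0 ≤ a' - b' by linarith),
    mul_nonneg (sub_nonneg.2 hdc) (show 0 ≤ a' - c' by linarith),
    mul_nonneg hd (show 0 ≤ a' + d' - b' - c' by linarith)]

lemma pow {a b c d : R} (h : SupermodularQuad a b c d) (k : ℕ) :
    SupermodularQuad (a ^ k) (b ^ k) (c ^ k) (d ^ k) := by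
  induction k with
  | zero => simpa using one
  | succ k ih => simpa only [pow_succ] using ih.mul h

lemma prod {ι : Type*} (s : Finset ι) {a b c d : ι → R}
    (h : ∀ i ∈ s, SupermodularQuad (a i) (b i) (c i) (d i)) :
    SupermodularQuad (∏ i ∈ s, a i) (∏ i ∈ s, b i) (∏ i ∈ s, c i) (∏ i ∈ s, d i) := by
  induction s using Finset.cons_induction with
  | empty => simpa using one
  | cons j s hj ih =>
    simp only [Finset.prod_cons]
    exact (h j (Finset.mem_cons_self j s)).mul
      (ih fun i hi => h i (Finset.mem_cons_of_mem hi))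

lemma add {a b c d a' b' c' d' : R} (h : SupermodularQuad a b c d)
    (h' : SupermodularQuad a' b' c' d') :
    SupermodularQuad (a + a') (b + b') (c + c') (d + d') := by
  obtain ⟨hd, hdb, hdc, habcd⟩ := h
  obtain ⟨hd', hdb', hdc', habcd'⟩ := h'
  exact ⟨add_nonneg hd hd', add_le_add hdb hdb', add_le_add hdc hdc', by linarith⟩

lemma sum {ι : Type*} (s : Finset ι) {a b c d : ι → R}
    (h : ∀ i ∈ s, SupermodularQuad (a i) (b i) (c i) (d i)) :
    SupermodularQuad (∑ i ∈ s, a i) (∑ i ∈ s, b i) (∑ i ∈ s, c i) (∑ i ∈ s, d i) := by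
  induction s using Finset.cons_induction with
  | empty =>
    simp only [Finset.sum_empty]
    exact ⟨le_rfl, le_rfl, le_rfl, le_rfl⟩
  | cons j s hj ih =>
    simp only [Finset.sum_cons]
    exact (h j (Finset.mem_cons_self j s)).add
      (ih fun i hi => h i (Finset.mem_cons_of_mem hi))

lemma const_mul {a b c d : R} (h : SupermodularQuad a b c d) {r : R} (hr : 0 ≤ r) :
    SupermodularQuad (r * a) (r * b) (r * c) (r * d) := by
  obtain ⟨hd, hdb, hdc, habcd⟩ := h
  refine ⟨mul_nonneg hr hd, mul_le_mul_of_nonneg_left hdb hr,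
    mul_le_mul_of_nonneg_left hdc hr, ?_⟩
  rw [← mul_add, ← mul_add]
  exact mul_le_mul_of_nonneg_left habcd hr

end SupermodularQuad

lemma MvPolynomial.supermodularQuad_eval {σ : Type*} {f : MvPolynomial σ R}
    (hf : ∀ α, 0 ≤ f.coeff α) {x y z : σ → R}
    (hx : ∀ i, 0 ≤ x i) (hy : ∀ i, 0 ≤ y i) (hz : ∀ i, 0 ≤ z i) :
    SupermodularQuad (eval (x + y + z) f) (eval (x + y) f) (eval (x + z) f) (eval x f) := by
  simp only [eval_eq, Pi.add_apply]
  exact .sum _ fun α _ => .const_mul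
    (.prod _ fun i _ => (SupermodularQuad.of_nonneg (hx i) (hy i) (hz i)).pow (α i)) (hf α)

/-- Supermodularity for polynomials with nonnegative coefficients:
if every coefficient of `f` is nonnegative, then for all nonnegative `x, y, z`,
`f(x+y+z) + f(x) ≥ f(x+y) + f(x+z)`. -/
theorem statement5 {n : ℕ} (f : MvPolynomial (Fin n) ℝ)
    (hf : ∀ α : Fin n →₀ ℕ, 0 ≤ f.coeff α)
    (x y z : Fin n → ℝ) (hx : ∀ i, 0 ≤ x i) (hy : ∀ i, 0 ≤ y i) (hz : ∀ i, 0 ≤ z i) :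
    eval (x + y) f + eval (x + z) f ≤ eval (x + y + z) f + eval x f :=
  (supermodularQuad_eval hf hx hy hz).2.2.2
end

section
/- Let Q = [−1,1]² × {0} ⊂ ℝ³ and let B = conv(Q ∪ {(0,0,1), (0,0,−1)}). Then vol₃(B) = 8/3, vol₂(p_1(B)) = vol₂(p_2(B)) = 2, and vol₁(p_{12}(B)) = 2, where p_1, p_2 are the orthogonal projections onto the coordinate planes e_1^⊥, e_2^⊥ and p_{12} is the orthogonal projection onto span(e_1,e_2)^⊥ = ℝe_3. In particular, vol₃(B)·vol₁(p_{12}(B)) = 16/3 > 4 = vol₂(p_1(B))·vol₂(p_2(B)), so the inequality vol(B)·vol(p_{12}(B)) ≤ vol(p_1(B))·vol(p_2(B)) fails for B. -/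
open MeasureTheory

namespace ConvexPaper

/-- The square `[−1,1]² × {0} ⊂ ℝ³`. -/
def Qsq : Set (EuclideanSpace ℝ (Fin 3)) :=
  {x | x 0 ∈ Set.Icc (-1 : ℝ) 1 ∧ x 1 ∈ Set.Icc (-1 : ℝ) 1 ∧ x 2 = 0}

/-- The point `e₃ = (0,0,1)`. -/
noncomputable def e3 : EuclideanSpace ℝ (Fin 3) :=
  WithLp.toLp 2 (fun i => if i = 2 then (1 : ℝ) else 0)

/-- The convex body `B = conv(Q ∪ {±e₃})`. -/
noncomputable def Bbody : Set (EuclideanSpace ℝ (Fin 3)) :=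
  convexHull ℝ (Qsq ∪ {e3, -e3})

/-- Projection deleting the first coordinate (onto `e₁^⊥`). -/
noncomputable def p1 (x : EuclideanSpace ℝ (Fin 3)) : EuclideanSpace ℝ (Fin 2) :=
  WithLp.toLp 2 (fun j : Fin 2 => x ⟨(j : ℕ) + 1, by omega⟩)

/-- Projection deleting the second coordinate (onto `e₂^⊥`). -/
noncomputable def p2 (x : EuclideanSpace ℝ (Fin 3)) : EuclideanSpace ℝ (Fin 2) :=
  WithLp.toLp 2 (fun j : Fin 2 => if j = 0 then x 0 else x 2)

/-- Projection onto `span(e₁,e₂)^⊥ = ℝe₃`, keeping only the third coordinate. -/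
noncomputable def p12 (x : EuclideanSpace ℝ (Fin 3)) : EuclideanSpace ℝ (Fin 1) :=
  WithLp.toLp 2 (fun _ : Fin 1 => x 2)

/-!
`B` is the double pyramid `{x | |x₁| + |x₃| ≤ 1, |x₂| + |x₃| ≤ 1}`: a point at height `x₃` lies on
the segment from the apex `sign(x₃) e₃` to a point of `Q`. Its slice at height `c` is a square of
side `2(1 - |c|)`, so by Fubini `vol₃(B) = ∫₋₁¹ (2(1 - |c|))² dc = 8/3`. Dropping the first or
second coordinate leaves the same kind of double pyramid one dimension lower, the square
`|y₁| + |y₂| ≤ 1` of area `∫₋₁¹ 2(1 - |c|) dc = 2`, and `p₁₂(B) = [-1, 1]`.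
-/

open Set

-- `conv([-1,1]ⁿ × {0} ∪ {±eₙ₊₁})`; for `n = 0` it is the segment `[-1, 1]`.
def doublePyramid (n : ℕ) : Set (Fin (n + 1) → ℝ) :=
  {y | |y (Fin.last n)| ≤ 1 ∧ ∀ i : Fin n, |y i.castSucc| + |y (Fin.last n)| ≤ 1}

theorem convexOn_abs_apply {ι : Type*} (i : ι) : ConvexOn ℝ univ fun y : ι → ℝ => |y i| := by
  simpa [Function.comp_def] using
    (convexOn_norm convex_univ).comp_linearMap (LinearMap.proj (R := ℝ) (φ := fun _ : ι => ℝ) i)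

theorem convex_doublePyramid (n : ℕ) : Convex ℝ (doublePyramid n) := by
  have h : doublePyramid n = {y | y ∈ univ ∧ |y (Fin.last n)| ≤ 1} ∩
      ⋂ i : Fin n, {y | y ∈ univ ∧ |y i.castSucc| + |y (Fin.last n)| ≤ 1} := by
    ext y; simp [doublePyramid]
  rw [h]
  exact ((convexOn_abs_apply _).convex_le 1).inter
    (convex_iInter fun i => ((convexOn_abs_apply _).add (convexOn_abs_apply _)).convex_le 1)

theorem doublePyramid_eq_preimage (n : ℕ) :
    doublePyramid n = MeasurableEquiv.piFinSuccAbove (fun _ => ℝ) (Fin.last n) ⁻¹'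
      {p | |p.1| ≤ 1 ∧ ‖p.2‖ + |p.1| ≤ 1} := by
  ext y
  simp only [doublePyramid, mem_ofPred_eq, mem_preimage, MeasurableEquiv.piFinSuccAbove_apply,
    Fin.insertNthEquiv_symm_apply]
  refine and_congr_right fun hy => ?_
  rw [← le_sub_iff_add_le, pi_norm_le_iff_of_nonneg (by linarith)]
  simp [le_sub_iff_add_le, Fin.init]

theorem volume_slice (n : ℕ) (c : ℝ) :
    volume {z : Fin n → ℝ | |c| ≤ 1 ∧ ‖z‖ + |c| ≤ 1} =
      (Icc (-1) 1).indicator (fun c => ENNReal.ofReal ((2 * (1 - |c|)) ^ n)) c := by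
  by_cases hc : |c| ≤ 1
  · have : {z : Fin n → ℝ | |c| ≤ 1 ∧ ‖z‖ + |c| ≤ 1} = Metric.closedBall 0 (1 - |c|) := by
      ext z; simp [hc, le_sub_iff_add_le]
    rw [this, Real.volume_pi_closedBall _ (by linarith), Fintype.card_fin,
      indicator_of_mem (mem_Icc.2 (abs_le.1 hc))]
  · rw [indicator_of_notMem (s := Icc (-1) 1) fun h => hc (abs_le.2 h)]
    simp [hc]

theorem integral_two_mul_one_sub_abs_pow (n : ℕ) :
    ∫ c in (-1 : ℝ)..1, (2 * (1 - |c|)) ^ n = 2 ^ (n + 1) / (n + 1) := by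
  have hcont : Continuous fun c : ℝ => (2 * (1 - |c|)) ^ n := by fun_prop
  have hsymm :
      ∫ c in (-1 : ℝ)..0, (2 * (1 - |c|)) ^ n = ∫ c in (0 : ℝ)..1, (2 * (1 - |c|)) ^ n := by
    simpa using (intervalIntegral.integral_comp_neg (a := 0) (b := 1)
      fun c : ℝ => (2 * (1 - |c|)) ^ n).symm
  have hright : ∫ c in (0 : ℝ)..1, (2 * (1 - |c|)) ^ n = 2 ^ n / (n + 1) := by
    calc ∫ c in (0 : ℝ)..1, (2 * (1 - |c|)) ^ n = ∫ c in (0 : ℝ)..1, 2 ^ n * (1 - c) ^ n := by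
          refine intervalIntegral.integral_congr fun c hc => ?_
          rw [uIcc_of_le zero_le_one] at hc
          simp only [abs_of_nonneg hc.1, mul_pow]
      _ = 2 ^ n / (n + 1) := by
          rw [intervalIntegral.integral_const_mul,
            intervalIntegral.integral_comp_sub_left fun c => c ^ n]
          simp [integral_pow, div_eq_mul_inv]
  rw [← intervalIntegral.integral_add_adjacent_intervals (b := 0) (hcont.intervalIntegrable _ _)
    (hcont.intervalIntegrable _ _), hsymm, hright]
  ring

theorem volume_doublePyramid (n : ℕ) :
    volume (doublePyramid n) = ENNReal.ofReal (2 ^ (n + 1) / (n + 1)) := by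
  have hU : MeasurableSet {p : ℝ × (Fin n → ℝ) | |p.1| ≤ 1 ∧ ‖p.2‖ + |p.1| ≤ 1} :=
    (measurableSet_le (by fun_prop : Measurable fun p : ℝ × (Fin n → ℝ) => |p.1|)
      measurable_const).inter
      (measurableSet_le (by fun_prop : Measurable fun p : ℝ × (Fin n → ℝ) => ‖p.2‖ + |p.1|)
        measurable_const)
  have hcont : Continuous fun c : ℝ => (2 * (1 - |c|)) ^ n := by fun_prop
  have hnonneg : 0 ≤ᵐ[volume.restrict (Icc (-1) 1)] fun c : ℝ => (2 * (1 - |c|)) ^ n :=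
    (ae_restrict_iff' measurableSet_Icc).2 <| ae_of_all _ fun c hc =>
      pow_nonneg (by linarith [abs_le.2 hc]) n
  rw [doublePyramid_eq_preimage,
    (volume_preserving_piFinSuccAbove (fun _ => ℝ) _).measure_preimage_equiv,
    Measure.volume_eq_prod, Measure.prod_apply hU]
  simp_rw [preimage_ofPred_eq, volume_slice]
  rw [lintegral_indicator measurableSet_Icc,
    ← ofReal_integral_eq_lintegral_ofReal hcont.integrableOn_Icc hnonneg,
    integral_Icc_eq_integral_Ioc, ← intervalIntegral.integral_of_le (by norm_num),
    integral_two_mul_one_sub_abs_pow]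

theorem volume_preimage_ofLp {ι : Type*} [Fintype ι] (s : Set (ι → ℝ)) :
    volume ((WithLp.ofLp : EuclideanSpace ℝ ι → ι → ℝ) ⁻¹' s) = volume s :=
  (EuclideanSpace.volume_preserving_symm_measurableEquiv_toLp ι).measure_preimage_equiv s

theorem toReal_volume_preimage_ofLp_doublePyramid (n : ℕ) :
    (volume (WithLp.ofLp ⁻¹' doublePyramid n : Set (EuclideanSpace ℝ (Fin (n + 1))))).toReal =
      2 ^ (n + 1) / (n + 1) := by
  rw [volume_preimage_ofLp, volume_doublePyramid, ENNReal.toReal_ofReal (by positivity)]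

theorem mem_doublePyramid_two {y : Fin 3 → ℝ} :
    y ∈ doublePyramid 2 ↔ |y 2| ≤ 1 ∧ |y 0| + |y 2| ≤ 1 ∧ |y 1| + |y 2| ≤ 1 := by
  simp [doublePyramid, Fin.forall_fin_two]

theorem mem_doublePyramid_one {y : Fin 2 → ℝ} :
    y ∈ doublePyramid 1 ↔ |y 1| ≤ 1 ∧ |y 0| + |y 1| ≤ 1 := by
  simp [doublePyramid]

theorem mem_doublePyramid_zero {y : Fin 1 → ℝ} : y ∈ doublePyramid 0 ↔ |y 0| ≤ 1 := by
  simp [doublePyramid]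

theorem preimage_ofLp_doublePyramid_two_subset_Bbody :
    WithLp.ofLp ⁻¹' doublePyramid 2 ⊆ Bbody := by
  intro x hx
  obtain ⟨h2, h0, h1⟩ := mem_doublePyramid_two.1 hx
  set t := |x 2| with ht
  -- At `t = 1` the division is by `0`, but then `a = 0`.
  have hcoord :
      ∀ a : ℝ, |a| + t ≤ 1 → a / (1 - t) ∈ Icc (-1) 1 ∧ (1 - t) * (a / (1 - t)) = a := by
    intro a ha
    have hs : 0 ≤ 1 - t := by linarith [abs_nonneg a]
    refine ⟨abs_le.1 ?_, ?_⟩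
    · rw [abs_div, abs_of_nonneg hs]
      exact div_le_one_of_le₀ (by linarith) hs
    · rcases eq_or_ne (1 - t) 0 with h | h
      · simp [h, abs_nonpos_iff.1 (by linarith : |a| ≤ 0)]
      · exact mul_div_cancel₀ a h
  obtain ⟨v, hv, htv⟩ :
      ∃ v ∈ ({e3, -e3} : Set (EuclideanSpace ℝ (Fin 3))), t • v = x 2 • e3 := by
    rcases le_or_gt 0 (x 2) with h | h
    · exact ⟨e3, by simp, by rw [ht, abs_of_nonneg h]⟩
    · exact ⟨-e3, by simp, by rw [ht, abs_of_neg h, neg_smul_neg]⟩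
  let q : EuclideanSpace ℝ (Fin 3) := WithLp.toLp 2 ![x 0 / (1 - t), x 1 / (1 - t), 0]
  have hq : q ∈ Bbody :=
    subset_convexHull ℝ _ (Or.inl ⟨(hcoord _ h0).1, (hcoord _ h1).1, rfl⟩)
  -- Since `t • v = x 2 • e3`, this puts `x` on the segment from `q ∈ Q` to the apex `v`.
  have hx : x = (1 - t) • q + x 2 • e3 := by
    ext i
    fin_cases i <;> simp [q, e3, (hcoord _ h0).2, (hcoord _ h1).2]
  rw [hx, ← htv]
  exact convex_convexHull ℝ _ hq (subset_convexHull ℝ _ (Or.inr hv)) (by linarith) (abs_nonneg _)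
    (by ring)

theorem Bbody_eq_preimage : Bbody = WithLp.ofLp ⁻¹' doublePyramid 2 := by
  refine (convexHull_min ?_ ((convex_doublePyramid 2).linear_preimage
    (WithLp.linearEquiv 2 ℝ (Fin 3 → ℝ)).toLinearMap)).antisymm
    preimage_ofLp_doublePyramid_two_subset_Bbody
  rintro x (⟨hx0, hx1, hx2⟩ | rfl | rfl) <;> simp_all [mem_doublePyramid_two, e3, abs_le]

theorem image_p1_Bbody : p1 '' Bbody = WithLp.ofLp ⁻¹' doublePyramid 1 := by
  rw [Bbody_eq_preimage]
  refine (RightInvOn.surjOn (f' := fun y => WithLp.toLp 2 ![0, y 0, y 1]) (fun y _ => ?_)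
    fun y hy => ?_).image_eq_of_mapsTo fun x hx => ?_
  · ext j; fin_cases j <;> rfl
  · obtain ⟨h1, h01⟩ := mem_doublePyramid_one.1 hy
    simp [mem_doublePyramid_two, h1, h01]
  · obtain ⟨h2, -, h12⟩ := mem_doublePyramid_two.1 hx
    exact mem_doublePyramid_one.2 ⟨h2, h12⟩

theorem image_p2_Bbody : p2 '' Bbody = WithLp.ofLp ⁻¹' doublePyramid 1 := by
  rw [Bbody_eq_preimage]
  refine (RightInvOn.surjOn (f' := fun y => WithLp.toLp 2 ![y 0, 0, y 1]) (fun y _ => ?_)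
    fun y hy => ?_).image_eq_of_mapsTo fun x hx => ?_
  · ext j; fin_cases j <;> rfl
  · obtain ⟨h1, h01⟩ := mem_doublePyramid_one.1 hy
    simp [mem_doublePyramid_two, h1, h01]
  · obtain ⟨h2, h02, -⟩ := mem_doublePyramid_two.1 hx
    exact mem_doublePyramid_one.2 ⟨h2, h02⟩

theorem image_p12_Bbody : p12 '' Bbody = WithLp.ofLp ⁻¹' doublePyramid 0 := by
  rw [Bbody_eq_preimage]
  refine (RightInvOn.surjOn (f' := fun y => WithLp.toLp 2 ![0, 0, y 0]) (fun y _ => ?_)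
    fun y hy => ?_).image_eq_of_mapsTo fun x hx => ?_
  · ext j; fin_cases j; rfl
  · simp [mem_doublePyramid_two, mem_doublePyramid_zero.1 hy]
  · exact mem_doublePyramid_zero.2 (mem_doublePyramid_two.1 hx).1

/-- For `B = conv([−1,1]²×{0} ∪ {±e₃}) ⊂ ℝ³`:
`vol₃(B) = 8/3`, `vol₂(p₁(B)) = vol₂(p₂(B)) = 2`, `vol₁(p₁₂(B)) = 2`, and consequently
`vol₃(B)·vol₁(p₁₂(B)) = 16/3 > 4 = vol₂(p₁(B))·vol₂(p₂(B))`: the 1-Rayleigh-type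
inequality `vol(B)·vol(p₁₂(B)) ≤ vol(p₁(B))·vol(p₂(B))` fails. -/
theorem statement9 :
    (volume Bbody).toReal = 8 / 3 ∧
    (volume (p1 '' Bbody)).toReal = 2 ∧
    (volume (p2 '' Bbody)).toReal = 2 ∧
    (volume (p12 '' Bbody)).toReal = 2 ∧
    (volume Bbody).toReal * (volume (p12 '' Bbody)).toReal >
      (volume (p1 '' Bbody)).toReal * (volume (p2 '' Bbody)).toReal := by
  have hB : (volume Bbody).toReal = 8 / 3 := by
    rw [Bbody_eq_preimage, toReal_volume_preimage_ofLp_doublePyramid]; norm_num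
  have h1 : (volume (p1 '' Bbody)).toReal = 2 := by
    rw [image_p1_Bbody, toReal_volume_preimage_ofLp_doublePyramid]; norm_num
  have h2 : (volume (p2 '' Bbody)).toReal = 2 := by
    rw [image_p2_Bbody, toReal_volume_preimage_ofLp_doublePyramid]; norm_num
  have h12 : (volume (p12 '' Bbody)).toReal = 2 := by
    rw [image_p12_Bbody, toReal_volume_preimage_ofLp_doublePyramid]; norm_num
  refine ⟨hB, h1, h2, h12, ?_⟩
  rw [hB, h1, h2, h12]
  norm_num

end ConvexPaper
end
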